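/- There exist permutations σ₁, σ₂, σ₃ of {1, …, 30} such that σ₁ ∘ σ₂ ∘ σ₃ = id, the subgroup generated by σ₁, σ₂, σ₃ acts transitively on {1, …, 30}, and the multisets of orbit sizes of the cyclic groups generated by σ₁, σ₂, σ₃ are, respectively, {6,6,3,3,2,2,1,1,1,1,1,1,1,1}, {16,5,4,2,1,1,1}, and {14,8,4,3,1}. -/

import Mathlib

/-- The number of orbits of the cyclic group generated by a permutation `σ`
(i.e., the number of cycles of `σ`, counting fixed points as cycles of length 1). -/
noncomputable def cycleCount {α : Type*} [Finite α] (σ : Equiv.Perm α) : ℕ :=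
  Nat.card (MulAction.orbitRel.Quotient (Subgroup.zpowers σ) α)

/-- The multiset of sizes of the orbits of the cyclic group generated by a permutation `σ`
(i.e., the cycle type of `σ`, with fixed points contributing parts equal to 1). -/
noncomputable def orbitSizes {α : Type*} [Finite α] (σ : Equiv.Perm α) : Multiset ℕ :=
  letI := Fintype.ofFinite (MulAction.orbitRel.Quotient (Subgroup.zpowers σ) α)
  (Finset.univ : Finset (MulAction.orbitRel.Quotient (Subgroup.zpowers σ) α)).val.map
    fun q => Nat.card q.orbit

/-!
The witness is an explicit triple of permutations of `Fin 30`. Since `⟨σ⟩` acts on each of its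
orbits as `σ` does on a cycle, the orbit sizes are the parts of the cycle partition of `σ` (its
cycle type padded with one `1` per fixed point), which the kernel evaluates. Transitivity holds
because the group generated by the triple contains the `30`-cycle `σ₁ ^ 2 * σ₂⁻¹`.
-/

open Equiv Finset MulAction Subgroup

namespace Equiv.Perm

variable {α : Type*}

theorem mem_orbit_zpowers_iff_sameCycle {σ : Perm α} {x y : α} :
    y ∈ orbit (zpowers σ) x ↔ σ.SameCycle x y := by
  rw [mem_orbit_iff, exists_zpowers]
  rfl

variable [Fintype α] [DecidableEq α] {σ : Perm α}

theorem orbit_zpowers_eq_support_cycleOf {x : α} (hx : x ∈ σ.support) :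
    orbit (zpowers σ) x = (σ.cycleOf x).support := by
  ext y
  rw [mem_orbit_zpowers_iff_sameCycle, mem_coe, mem_support_cycleOf_iff, and_iff_left hx]

theorem orbit_zpowers_eq_singleton {x : α} (hx : x ∉ σ.support) :
    orbit (zpowers σ) x = {x} := by
  ext y
  rw [mem_orbit_zpowers_iff_sameCycle, Set.mem_singleton_iff]
  exact ⟨fun h => (h.eq_of_left (notMem_support.mp hx)).symm, fun h => h ▸ SameCycle.refl _ _⟩

theorem card_orbit_zpowers_eq_one_iff {x : α} :
    Nat.card (orbit (zpowers σ) x) = 1 ↔ x ∉ σ.support := by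
  by_cases hx : x ∈ σ.support
  · rw [orbit_zpowers_eq_support_cycleOf hx, Nat.card_coe_set_eq, Set.ncard_coe_finset]
    have := two_le_card_support_cycleOf_iff.mpr (mem_support.mp hx)
    simp only [hx, not_true_eq_false, iff_false]
    omega
  · simp [orbit_zpowers_eq_singleton hx, hx]

theorem map_card_orbit_filter_ne_one [Fintype (orbitRel.Quotient (zpowers σ) α)] :
    ((univ : Finset (orbitRel.Quotient (zpowers σ) α)).val.filter
        fun q => Nat.card q.orbit ≠ 1).map (fun q => Nat.card q.orbit) = σ.cycleType := by
  have mem_filter_iff (x : α) : (Quotient.mk'' x : orbitRel.Quotient (zpowers σ) α) ∈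
      (univ.val.filter fun q : orbitRel.Quotient (zpowers σ) α => Nat.card q.orbit ≠ 1) ↔
        x ∈ σ.support := by
    rw [Multiset.mem_filter, orbitRel.Quotient.orbit_mk, Ne, card_orbit_zpowers_eq_one_iff,
      not_not, and_iff_right (mem_univ_val _)]
  refine Multiset.map_eq_map_of_bij_of_nodup _ _ (univ.nodup.filter _) σ.cycleFactorsFinset.nodup
    (fun q _ => q.liftOn' σ.cycleOf fun x y h =>
      (mem_orbit_zpowers_iff_sameCycle.mp h).cycleOf_eq.symm) ?_ ?_ ?_ ?_
  · intro q hq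
    obtain ⟨x, rfl⟩ := Quotient.mk''_surjective q
    exact cycleOf_mem_cycleFactorsFinset_iff.mpr ((mem_filter_iff x).mp hq)
  · intro q₁ hq₁ q₂ hq₂ h
    obtain ⟨x, rfl⟩ := Quotient.mk''_surjective q₁
    obtain ⟨y, rfl⟩ := Quotient.mk''_surjective q₂
    have hy : y ∈ (σ.cycleOf x).support := by
      rw [show σ.cycleOf x = σ.cycleOf y from h, mem_support_cycleOf_iff]
      exact ⟨SameCycle.refl _ _, (mem_filter_iff y).mp hq₂⟩
    exact Quotient.eq''.mpr (mem_orbit_zpowers_iff_sameCycle.mpr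
      (mem_support_cycleOf_iff.mp hy).1.symm)
  · intro c hc
    obtain ⟨a, ha⟩ := (mem_cycleFactorsFinset_iff.mp hc).1.nonempty_support
    exact ⟨Quotient.mk'' a, (mem_filter_iff a).mpr (mem_cycleFactorsFinset_support_le hc ha),
      (cycle_is_cycleOf ha hc).symm⟩
  · intro q hq
    obtain ⟨x, rfl⟩ := Quotient.mk''_surjective q
    rw [orbitRel.Quotient.orbit_mk, orbit_zpowers_eq_support_cycleOf ((mem_filter_iff x).mp hq),
      Nat.card_coe_set_eq, Set.ncard_coe_finset]
    rfl

theorem map_card_orbit_filter_eq_one [Fintype (orbitRel.Quotient (zpowers σ) α)] :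
    ((univ : Finset (orbitRel.Quotient (zpowers σ) α)).val.filter
        fun q => Nat.card q.orbit = 1).map (fun q => Nat.card q.orbit) =
      Multiset.replicate (Fintype.card α - #σ.support) 1 := by
  refine Multiset.eq_replicate.mpr ⟨?_, by simp +contextual⟩
  rw [Multiset.card_map, ← Finset.filter_val, ← card_def, ← card_compl, eq_comm]
  refine card_bij (fun x _ => Quotient.mk'' x) ?_ ?_ ?_
  · intro x hx
    rw [mem_filter, orbitRel.Quotient.orbit_mk, card_orbit_zpowers_eq_one_iff, ← mem_compl]
    exact ⟨mem_univ _, hx⟩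
  · intro x hx y hy hxy
    rw [mem_compl] at hx
    have : y ∈ orbit (zpowers σ) x := Quotient.eq''.mp hxy.symm
    rwa [orbit_zpowers_eq_singleton hx, Set.mem_singleton_iff, eq_comm] at this
  · intro q hq
    obtain ⟨x, rfl⟩ := Quotient.mk''_surjective q
    rw [mem_filter, orbitRel.Quotient.orbit_mk, card_orbit_zpowers_eq_one_iff] at hq
    exact ⟨x, mem_compl.mpr hq.2, rfl⟩

theorem orbitSizes_eq_parts_partition (σ : Perm α) : orbitSizes σ = σ.partition.parts := by
  let _ := Fintype.ofFinite (orbitRel.Quotient (zpowers σ) α)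
  rw [parts_partition, orbitSizes,
    ← Multiset.filter_add_not (fun q => Nat.card q.orbit = 1) univ.val, Multiset.map_add,
    map_card_orbit_filter_eq_one, ← map_card_orbit_filter_ne_one, add_comm]

theorem exists_mem_apply_eq_of_cycleType_eq_card {H : Subgroup (Perm α)} {c : Perm α}
    (hc : c ∈ H) (hcycle : c.cycleType = {Fintype.card α}) (x y : α) : ∃ g ∈ H, g x = y := by
  have hc_cycle : c.IsCycle := card_cycleType_eq_one.mp (by simp [hcycle])
  have hsupport : c.support = univ :=
    eq_univ_of_card _ (by rw [← sum_cycleType, hcycle, Multiset.sum_singleton])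
  have hmoved (z : α) : c z ≠ z := mem_support.mp (hsupport ▸ mem_univ z)
  obtain ⟨i, hi⟩ := hc_cycle.exists_zpow_eq (hmoved x) (hmoved y)
  exact ⟨c ^ i, zpow_mem hc i, hi⟩

end Equiv.Perm

open Equiv.Perm

def perm₁ : Perm (Fin 30) :=
  c[0, 1, 22, 5, 7, 27] * c[3, 25, 28, 29, 24, 23] * c[4, 13] * c[6, 12] * c[8, 11, 26] *
    c[18, 21, 20]

def perm₂ : Perm (Fin 30) :=
  c[0, 12, 19, 10, 1, 20, 6, 7, 2, 18, 28, 9, 21, 5, 24, 15] * c[3, 14, 22, 29, 16] *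
    c[4, 27, 11, 13] * c[8, 17]

def perm₃ : Perm (Fin 30) :=
  c[0, 4, 11, 17, 8, 26, 27, 6] * c[1, 15, 24, 22, 10, 19, 12, 20, 9, 28, 25, 16, 29, 18] *
    c[2, 7, 21] * c[3, 23, 5, 14]

set_option maxRecDepth 10000 in
theorem perm₁_mul_perm₂_mul_perm₃ : perm₁ * perm₂ * perm₃ = 1 := by decide

set_option maxRecDepth 10000 in
theorem parts_partition_perm₁ :
    perm₁.partition.parts = {6, 6, 3, 3, 2, 2, 1, 1, 1, 1, 1, 1, 1, 1} := by decide

set_option maxRecDepth 10000 in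
theorem parts_partition_perm₂ : perm₂.partition.parts = {16, 5, 4, 2, 1, 1, 1} := by decide

set_option maxRecDepth 10000 in
theorem parts_partition_perm₃ : perm₃.partition.parts = {14, 8, 4, 3, 1} := by decide

set_option maxRecDepth 10000 in
theorem cycleType_perm₁_mul_perm₁_mul_perm₂_inv :
    (perm₁ * perm₁ * perm₂⁻¹).cycleType = {30} := by decide

/-- Realizability of the degree-30 branch-data triple
`[6, 6, 3, 3, 2, 2, 1, 1, 1, 1, 1, 1, 1, 1]`, `[16, 5, 4, 2, 1, 1, 1]`, `[14, 8, 4, 3, 1]`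
by a transitive permutation triple with product the identity. -/
theorem realizable_triple_18 :
    ∃ σ₁ σ₂ σ₃ : Equiv.Perm (Fin 30),
      σ₁ * σ₂ * σ₃ = 1 ∧
      (∀ x y : Fin 30,
        ∃ g ∈ Subgroup.closure ({σ₁, σ₂, σ₃} : Set (Equiv.Perm (Fin 30))), g x = y) ∧
      orbitSizes σ₁ = ({6, 6, 3, 3, 2, 2, 1, 1, 1, 1, 1, 1, 1, 1} : Multiset ℕ) ∧
      orbitSizes σ₂ = ({16, 5, 4, 2, 1, 1, 1} : Multiset ℕ) ∧
      orbitSizes σ₃ = ({14, 8, 4, 3, 1} : Multiset ℕ) := by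
  have h₁ : perm₁ ∈ closure ({perm₁, perm₂, perm₃} : Set (Perm (Fin 30))) :=
    subset_closure (by simp)
  have h₂ : perm₂ ∈ closure ({perm₁, perm₂, perm₃} : Set (Perm (Fin 30))) :=
    subset_closure (by simp)
  refine ⟨perm₁, perm₂, perm₃, perm₁_mul_perm₂_mul_perm₃,
    exists_mem_apply_eq_of_cycleType_eq_card (mul_mem (mul_mem h₁ h₁) (inv_mem h₂))
      cycleType_perm₁_mul_perm₁_mul_perm₂_inv, ?_, ?_, ?_⟩
  · rw [orbitSizes_eq_parts_partition, parts_partition_perm₁]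
  · rw [orbitSizes_eq_parts_partition, parts_partition_perm₂]
  · rw [orbitSizes_eq_parts_partition, parts_partition_perm₃]
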